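/- arXiv:2002.12688 — 2 statements merged into one kernel-verified Lean document; each statement's English description precedes it below -/
import Mathlib

section
/- Under the random-permutation data-partition model, the expected (over the permutation π and the minibatches ξ) squared Frobenius norm of the stochastic subgradient matrix satisfies E_π[E_ξ[||G||²_F]] = M·( ||∂F||₂² + σ²·(S−B)/(B(S−1)) ). -/
open Finset

noncomputable section

/-- Squared Frobenius norm of a real matrix. -/
def frobSq {n M : ℕ} (B : Matrix (Fin n) (Fin M) ℝ) : ℝ := ∑ i, ∑ j, B i j ^ 2

/-- Frobenius norm of a real matrix. -/
def frobNorm {n M : ℕ} (B : Matrix (Fin n) (Fin M) ℝ) : ℝ := Real.sqrt (frobSq B)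

/-- `ΔB := B (I - 𝟙𝟙ᵀ/M)`: subtract from every column the average of all columns. -/
def ctr {n M : ℕ} (B : Matrix (Fin n) (Fin M) ℝ) : Matrix (Fin n) (Fin M) ℝ :=
  Matrix.of fun i j => B i j - (∑ j', B i j') / M

open Classical in
/-- The valid ways to split the expanded dataset (each of the `S` points replicated `C`
times) across the `M` nodes: each point is placed at `C` distinct nodes and every node
receives exactly `L = C·S/M` points.  A uniform random permutation of the expanded dataset,
constrained so that the `C` copies of a point go to `C` different nodes, induces the uniform
distribution on this set. -/
def allocs (S M C L : ℕ) : Finset (Fin S → Finset (Fin M)) :=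
  Finset.univ.filter fun a =>
    (∀ s, (a s).card = C) ∧ ∀ j, (Finset.univ.filter fun s => j ∈ a s).card = L

open Classical in
/-- Given an allocation `a`, the ways each node `j` can draw a minibatch of size `B`
(uniformly, without replacement) from its local dataset `{s | j ∈ a s}`. -/
def batches {S M : ℕ} (a : Fin S → Finset (Fin M)) (B : ℕ) :
    Finset (Fin M → Finset (Fin S)) :=
  Finset.univ.filter fun ξ =>
    ∀ j, ξ j ⊆ (Finset.univ.filter fun s => j ∈ a s) ∧ (ξ j).card = B

/-- The stochastic subgradient matrix: its `j`-th column is the average of the subgradients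
over the minibatch `ξ j` drawn at node `j`. -/
def Gmat {n S M : ℕ} (g : Fin S → Fin n → ℝ) (B : ℕ)
    (ξ : Fin M → Finset (Fin S)) : Matrix (Fin n) (Fin M) ℝ :=
  Matrix.of fun i j => (∑ s ∈ ξ j, g s i) / B

/-- The entrywise conditional expectation `E_ξ[G]` of the stochastic subgradient matrix
given the allocation `a` (averaging uniformly over the minibatch draws). -/
def EGmat {n S M : ℕ} (g : Fin S → Fin n → ℝ) (B : ℕ)
    (a : Fin S → Finset (Fin M)) : Matrix (Fin n) (Fin M) ℝ :=
  Matrix.of fun i j => (∑ ξ ∈ batches a B, Gmat g B ξ i j) / ((batches a B).card : ℝ)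


open Classical

lemma mem_allocs {S M C L : ℕ} {a : Fin S → Finset (Fin M)} :
    a ∈ allocs S M C L ↔
      (∀ s, (a s).card = C) ∧ ∀ j, (Finset.univ.filter fun s => j ∈ a s).card = L := by
  simp [allocs]

lemma mem_batches {S M : ℕ} {a : Fin S → Finset (Fin M)} {B : ℕ}
    {ξ : Fin M → Finset (Fin S)} :
    ξ ∈ batches a B ↔
      ∀ j, ξ j ⊆ (Finset.univ.filter fun s => j ∈ a s) ∧ (ξ j).card = B := by
  simp [batches]

lemma mem_image_symm {α : Type*} [DecidableEq α] (σ : Equiv.Perm α) {T : Finset α} {s : α} :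
    s ∈ T.image σ.symm ↔ σ s ∈ T := by
  simp only [Finset.mem_image]
  constructor
  · rintro ⟨u, hu, rfl⟩; simpa using hu
  · intro h; exact ⟨σ s, h, σ.symm_apply_apply s⟩

section Perm
variable {S M C L B : ℕ}

lemma comp_perm_mem_allocs (σ : Equiv.Perm (Fin S)) {a : Fin S → Finset (Fin M)}
    (ha : a ∈ allocs S M C L) : (a ∘ σ) ∈ allocs S M C L := by
  rw [mem_allocs] at ha ⊢
  refine ⟨fun s => ha.1 (σ s), fun j => ?_⟩
  rw [← ha.2 j]
  apply Finset.card_bij' (fun s _ => σ s) (fun s _ => σ.symm s)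
  · intro s hs
    simp only [Function.comp, Finset.mem_filter, Finset.mem_univ, true_and] at hs ⊢
    exact hs
  · intro s hs
    simp only [Function.comp, Finset.mem_filter, Finset.mem_univ, true_and] at hs ⊢
    simpa using hs
  · intro s _; simp
  · intro s _; simp

lemma batch_reindex (σ : Equiv.Perm (Fin S)) (a : Fin S → Finset (Fin M))
    (F : (Fin M → Finset (Fin S)) → ℝ) :
    ∑ ξ ∈ batches a B, F (fun j => (ξ j).image σ.symm)
      = ∑ ξ ∈ batches (a ∘ σ) B, F ξ := by
  apply Finset.sum_nbij' (i := fun ξ => fun j => (ξ j).image σ.symm)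
    (j := fun ξ => fun j => (ξ j).image σ)
  · intro ξ hξ
    rw [mem_batches] at hξ ⊢
    intro j
    obtain ⟨hsub, hcard⟩ := hξ j
    constructor
    · intro t ht
      simp only [Finset.mem_image] at ht
      obtain ⟨u, hu, rfl⟩ := ht
      have := hsub hu
      simp only [Finset.mem_filter, Finset.mem_univ, true_and, Function.comp] at this ⊢
      simpa using this
    · rw [Finset.card_image_of_injective _ σ.symm.injective, hcard]
  · intro ξ hξ
    rw [mem_batches] at hξ ⊢
    intro j
    obtain ⟨hsub, hcard⟩ := hξ j
    constructor
    · intro t ht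
      simp only [Finset.mem_image] at ht
      obtain ⟨u, hu, rfl⟩ := ht
      have := hsub hu
      simp only [Finset.mem_filter, Finset.mem_univ, true_and, Function.comp] at this ⊢
      exact this
    · rw [Finset.card_image_of_injective _ σ.injective, hcard]
  · intro ξ _
    funext j
    rw [Finset.image_image]
    simp
  · intro ξ _
    funext j
    rw [Finset.image_image]
    simp
  · intro ξ _
    rfl

def Kr (S M C L B : ℕ) (j : Fin M) (s s' : Fin S) : ℝ :=
  ∑ a ∈ allocs S M C L, ∑ ξ ∈ batches a B,
    if s ∈ ξ j ∧ s' ∈ ξ j then (1:ℝ) else 0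

lemma Kr_perm (σ : Equiv.Perm (Fin S)) (j : Fin M) (s s' : Fin S) :
    Kr S M C L B j (σ s) (σ s') = Kr S M C L B j s s' := by
  unfold Kr
  apply Finset.sum_nbij' (i := fun a => a ∘ σ) (j := fun a => a ∘ σ.symm)
  · intro a ha; exact comp_perm_mem_allocs σ ha
  · intro a ha; exact comp_perm_mem_allocs σ.symm ha
  · intro a _; funext t; simp
  · intro a _; funext t; simp
  · intro a _
    rw [← batch_reindex σ a]
    apply Finset.sum_congr rfl
    intro ξ _
    congr 1
    rw [eq_iff_iff, mem_image_symm, mem_image_symm]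

end Perm
lemma swap_in {γ α β : Type*} [Fintype γ] (A : Finset α) (Bf : α → Finset β)
    (f : γ → α → β → ℝ) :
    ∑ t : γ, ∑ a ∈ A, ∑ ξ ∈ Bf a, f t a ξ
      = ∑ a ∈ A, ∑ ξ ∈ Bf a, ∑ t : γ, f t a ξ := by
  rw [Finset.sum_comm]
  exact Finset.sum_congr rfl fun a _ => Finset.sum_comm

section Count
variable {S M C L B : ℕ}

lemma exists_perm_two {α : Type*} [DecidableEq α] {t t' s s' : α}
    (h1 : t ≠ t') (h2 : s ≠ s') : ∃ σ : Equiv.Perm α, σ t = s ∧ σ t' = s' := by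
  set u := Equiv.swap t s t' with hu
  have hus : u ≠ s := by
    rw [hu]
    by_cases h : t' = s
    · subst h
      rw [Equiv.swap_apply_right]
      exact h1
    · rw [Equiv.swap_apply_of_ne_of_ne (Ne.symm h1) h]
      exact h
  refine ⟨(Equiv.swap t s).trans (Equiv.swap u s'), ?_, ?_⟩
  · simp only [Equiv.trans_apply, Equiv.swap_apply_left]
    exact Equiv.swap_apply_of_ne_of_ne (Ne.symm hus) h2
  · simp only [Equiv.trans_apply, ← hu, Equiv.swap_apply_left]

lemma indicator_pair_sum (T : Finset (Fin S)) :
    ∑ t : Fin S, ∑ t' : Fin S, (if t ∈ T ∧ t' ∈ T then (1:ℝ) else 0)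
      = (T.card : ℝ) ^ 2 := by
  have h : ∀ t t' : Fin S, (if t ∈ T ∧ t' ∈ T then (1:ℝ) else 0)
      = (if t ∈ T then (1:ℝ) else 0) * (if t' ∈ T then (1:ℝ) else 0) := by
    intro t t'
    by_cases h1 : t ∈ T <;> by_cases h2 : t' ∈ T <;> simp [h1, h2]
  simp_rw [h]
  rw [← Finset.sum_mul_sum, Finset.sum_boole, Finset.filter_univ_mem, sq]

lemma indicator_diag_sum (T : Finset (Fin S)) :
    ∑ t : Fin S, (if t ∈ T ∧ t ∈ T then (1:ℝ) else 0) = (T.card : ℝ) := by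
  simp only [and_self]
  rw [Finset.sum_boole, Finset.filter_univ_mem]

lemma Kr_trace (j : Fin M) :
    ∑ t : Fin S, Kr S M C L B j t t
      = (B : ℝ) * ∑ a ∈ allocs S M C L, ((batches a B).card : ℝ) := by
  unfold Kr
  rw [swap_in, Finset.mul_sum]
  apply Finset.sum_congr rfl
  intro a _
  have : ∀ ξ ∈ batches a B,
      ∑ t : Fin S, (if t ∈ ξ j ∧ t ∈ ξ j then (1:ℝ) else 0) = (B:ℝ) := by
    intro ξ hξ
    rw [indicator_diag_sum, (mem_batches.mp hξ j).2]
  rw [Finset.sum_congr rfl this, Finset.sum_const, nsmul_eq_mul, mul_comm]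

lemma Kr_total (j : Fin M) :
    ∑ t : Fin S, ∑ t' : Fin S, Kr S M C L B j t t'
      = (B : ℝ)^2 * ∑ a ∈ allocs S M C L, ((batches a B).card : ℝ) := by
  unfold Kr
  rw [Finset.sum_congr rfl fun t _ => swap_in _ _ _, swap_in, Finset.mul_sum]
  apply Finset.sum_congr rfl
  intro a _
  have : ∀ ξ ∈ batches a B,
      ∑ t : Fin S, ∑ t' : Fin S, (if t ∈ ξ j ∧ t' ∈ ξ j then (1:ℝ) else 0) = (B:ℝ)^2 := by
    intro ξ hξ
    rw [indicator_pair_sum, (mem_batches.mp hξ j).2]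
  rw [Finset.sum_congr rfl this, Finset.sum_const, nsmul_eq_mul, mul_comm]

lemma Kr_diag_const (j : Fin M) (s t : Fin S) :
    Kr S M C L B j t t = Kr S M C L B j s s := by
  have := Kr_perm (S := S) (M := M) (C := C) (L := L) (B := B) (Equiv.swap t s) j t t
  simpa [Equiv.swap_apply_left] using this.symm

lemma Kr_off_const (j : Fin M) {s s' t t' : Fin S} (h1 : t ≠ t') (h2 : s ≠ s') :
    Kr S M C L B j t t' = Kr S M C L B j s s' := by
  obtain ⟨σ, hσ1, hσ2⟩ := exists_perm_two h2 h1
  have := Kr_perm (S := S) (M := M) (C := C) (L := L) (B := B) σ j s s'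
  rw [hσ1, hσ2] at this
  exact this

lemma Kr_diag_val (hS : 0 < S) (j : Fin M) (s : Fin S) :
    Kr S M C L B j s s
      = (B : ℝ) * (∑ a ∈ allocs S M C L, ((batches a B).card : ℝ)) / S := by
  have h := Kr_trace (S := S) (M := M) (C := C) (L := L) (B := B) j
  rw [Finset.sum_congr rfl fun t _ => Kr_diag_const j s t, Finset.sum_const,
    Finset.card_univ, Fintype.card_fin, nsmul_eq_mul] at h
  have hS0 : (S : ℝ) ≠ 0 := Nat.cast_ne_zero.mpr hS.ne'
  field_simp
  linarith [h]

lemma Kr_off_val (hS : 2 ≤ S) (j : Fin M) {s s' : Fin S} (hne : s ≠ s') :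
    Kr S M C L B j s s'
      = ((B : ℝ)^2 - B) * (∑ a ∈ allocs S M C L, ((batches a B).card : ℝ))
        / ((S : ℝ) * ((S:ℝ) - 1)) := by
  have htot := Kr_total (S := S) (M := M) (C := C) (L := L) (B := B) j
  have htr := Kr_trace (S := S) (M := M) (C := C) (L := L) (B := B) j
  have hsplit : ∀ t : Fin S, ∑ t' : Fin S, Kr S M C L B j t t'
      = Kr S M C L B j t t + ∑ t' ∈ Finset.univ.erase t, Kr S M C L B j t t' := by
    intro t
    rw [Finset.add_sum_erase _ _ (Finset.mem_univ t)]
  have herase : ∀ t : Fin S, ∑ t' ∈ Finset.univ.erase t, Kr S M C L B j t t'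
      = ((S:ℝ) - 1) * Kr S M C L B j s s' := by
    intro t
    have hc : ∀ t' ∈ Finset.univ.erase t, Kr S M C L B j t t' = Kr S M C L B j s s' := by
      intro t' ht'
      exact Kr_off_const j (Ne.symm (Finset.mem_erase.mp ht').1) hne
    rw [Finset.sum_congr rfl hc, Finset.sum_const, Finset.card_erase_of_mem (Finset.mem_univ t),
      Finset.card_univ, Fintype.card_fin, nsmul_eq_mul, Nat.cast_sub (by omega), Nat.cast_one]
  rw [Finset.sum_congr rfl fun t _ => hsplit t, Finset.sum_add_distrib, htr,
    Finset.sum_congr rfl fun t _ => herase t, Finset.sum_const, Finset.card_univ,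
    Fintype.card_fin, nsmul_eq_mul] at htot
  have hS0 : (S : ℝ) ≠ 0 := Nat.cast_ne_zero.mpr (by omega)
  have hS1 : (S : ℝ) - 1 ≠ 0 := by
    have : (2:ℝ) ≤ (S:ℝ) := by exact_mod_cast hS
    intro h; linarith
  rw [eq_div_iff (mul_ne_zero hS0 hS1)]
  linear_combination htot

end Count


lemma batches_eq_pi {S M : ℕ} (a : Fin S → Finset (Fin M)) (B : ℕ) :
    batches a B =
      Fintype.piFinset (fun j => (Finset.univ.filter fun s => j ∈ a s).powersetCard B) := by
  ext ξ
  simp [mem_batches, Fintype.mem_piFinset, Finset.mem_powersetCard, forall_and]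

lemma card_batches {S M C L B : ℕ} {a : Fin S → Finset (Fin M)}
    (ha : a ∈ allocs S M C L) : (batches a B).card = (L.choose B) ^ M := by
  rw [batches_eq_pi, Fintype.card_piFinset]
  have h := (mem_allocs.mp ha).2
  simp [Finset.card_powersetCard, h, Finset.prod_const, Finset.card_univ]

lemma mod_cancel {M x k₁ k₂ : ℕ} (h₁ : k₁ < M) (h₂ : k₂ < M)
    (h : (x + k₁) % M = (x + k₂) % M) : k₁ = k₂ := by
  have h' : k₁ ≡ k₂ [MOD M] := Nat.ModEq.add_left_cancel' x h
  unfold Nat.ModEq at h'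
  rwa [Nat.mod_eq_of_lt h₁, Nat.mod_eq_of_lt h₂] at h'

lemma range_filter_mod_card {M L j : ℕ} (hM : 0 < M) (hj : j < M) :
    (((Finset.range (M * L)).filter fun t => t % M = j)).card = L := by
  conv_rhs => rw [← Finset.card_range L]
  apply Finset.card_bij' (fun t _ => t / M) (fun q _ => q * M + j)
  · intro t ht
    simp only [Finset.mem_filter, Finset.mem_range] at ht
    simp only [Finset.mem_range]
    rw [Nat.div_lt_iff_lt_mul hM]
    have := Nat.mul_comm M L
    omega
  · intro q hq
    simp only [Finset.mem_range] at hq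
    simp only [Finset.mem_filter, Finset.mem_range]
    refine ⟨?_, by rw [mul_comm q M, Nat.mul_add_mod, Nat.mod_eq_of_lt hj]⟩
    calc q * M + j < q * M + M := by omega
      _ = (q+1) * M := by ring
      _ ≤ L * M := Nat.mul_le_mul_right M (by omega)
      _ = M * L := by ring
  · intro t ht
    simp only [Finset.mem_filter, Finset.mem_range] at ht
    have := Nat.div_add_mod t M
    have := Nat.mul_comm M (t / M)
    omega
  · intro q hq
    rw [mul_comm, Nat.mul_add_div hM, Nat.div_eq_of_lt hj]
    omega


lemma allocs_nonempty {S M C L : ℕ} (hM : 0 < M) (hC1 : 1 ≤ C) (hCM : C ≤ M)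
    (hL : M * L = C * S) : (allocs S M C L).Nonempty := by
  set a₀ : Fin S → Finset (Fin M) := fun s =>
    (Finset.range C).image (fun k => (⟨(s.val * C + k) % M, Nat.mod_lt _ hM⟩ : Fin M)) with ha₀
  have hmem : ∀ (s : Fin S) (j : Fin M),
      j ∈ a₀ s ↔ ∃ k < C, (s.val * C + k) % M = j.val := by
    intro s j
    simp [ha₀, Fin.ext_iff, Finset.mem_image]
  refine ⟨a₀, mem_allocs.mpr ⟨?_, ?_⟩⟩
  · intro s
    rw [ha₀]
    rw [Finset.card_image_of_injOn, Finset.card_range]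
    intro k₁ h₁ k₂ h₂ h
    simp only [Finset.mem_coe, Finset.mem_range] at h₁ h₂
    rw [Fin.mk.injEq] at h
    exact mod_cancel (lt_of_lt_of_le h₁ hCM) (lt_of_lt_of_le h₂ hCM) h
  · intro j
    have key : (Finset.univ.filter fun s => j ∈ a₀ s).card
        = (((Finset.range (M * L)).filter fun t => t % M = j.val)).card := by
      symm
      apply Finset.card_bij (fun t ht => (⟨t / C, by
        simp only [Finset.mem_filter, Finset.mem_range] at ht
        rw [Nat.div_lt_iff_lt_mul (by omega)]
        have := hL
        have := Nat.mul_comm S C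
        omega⟩ : Fin S))
      · intro t ht
        simp only [Finset.mem_filter, Finset.mem_range] at ht
        simp only [Finset.mem_filter, Finset.mem_univ, true_and]
        rw [hmem]
        refine ⟨t % C, Nat.mod_lt _ (by omega), ?_⟩
        have h1 : t / C * C + t % C = t := by
          have := Nat.div_add_mod t C
          have := Nat.mul_comm C (t / C)
          omega
        rw [h1, ht.2]
      · intro t₁ h₁ t₂ h₂ h
        simp only [Finset.mem_filter, Finset.mem_range] at h₁ h₂
        rw [Fin.mk.injEq] at h
        have e1 := Nat.div_add_mod t₁ C
        have e2 := Nat.div_add_mod t₂ C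
        rw [h] at e1
        have hm1 : t₁ % C < C := Nat.mod_lt _ (by omega)
        have hm2 : t₂ % C < C := Nat.mod_lt _ (by omega)
        have hmm : (C * (t₂ / C) + t₁ % C) % M = (C * (t₂ / C) + t₂ % C) % M := by
          rw [e1, e2, h₁.2, h₂.2]
        have := mod_cancel (lt_of_lt_of_le hm1 hCM) (lt_of_lt_of_le hm2 hCM) hmm
        omega
      · intro s hs
        simp only [Finset.mem_filter, Finset.mem_univ, true_and] at hs
        rw [hmem] at hs
        obtain ⟨k, hk, hkm⟩ := hs
        have htlt : s.val * C + k < M * L := by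
          have h1 : s.val * C + k < (s.val + 1) * C := by
            have : (s.val + 1) * C = s.val * C + C := by ring
            omega
          have h2 : (s.val + 1) * C ≤ S * C := Nat.mul_le_mul_right C s.isLt
          have := Nat.mul_comm S C
          omega
        refine ⟨s.val * C + k, Finset.mem_filter.mpr ⟨Finset.mem_range.mpr htlt, hkm⟩, ?_⟩
        apply Fin.ext
        simp only
        rw [mul_comm, Nat.mul_add_div (by omega : 0 < C), Nat.div_eq_of_lt hk]
        omega
    rw [key, range_filter_mod_card hM j.isLt]

/-- **Proposition 2, first identity.** Under the random-permutation data-partition model,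
`E_π[E_ξ[‖G‖²_F]] = M (‖∂F‖₂² + σ² (S-B)/(B(S-1)))`. -/
theorem statement3
    -- dataset of `S` points, `M` nodes, replication factor `C`, local dataset size
    -- `L = C·S/M`, and minibatch size `B`
    (n S M C B L : ℕ) (hM : 0 < M) (hC1 : 1 ≤ C) (hCM : C ≤ M) (hS : 2 ≤ S)
    (hL : M * L = C * S) (hB1 : 1 ≤ B) (hBL : B ≤ L)
    -- the subgradients of the loss at the fixed parameter vector `w`, at each data point
    (g : Fin S → Fin n → ℝ)
    -- the full-dataset average subgradient `∂F` and the total variance `σ²`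
    (gradF : Fin n → ℝ) (hgradF : gradF = fun i => (∑ s, g s i) / S)
    (sigma2 : ℝ) (hsigma2 : sigma2 = ∑ i, (∑ s, (g s i - gradF i) ^ 2) / S)
 :
    (∑ a ∈ allocs S M C L,
        (∑ ξ ∈ batches a B, frobSq (Gmat g B ξ)) / ((batches a B).card : ℝ))
      / ((allocs S M C L).card : ℝ)
    = M * ((∑ i, gradF i ^ 2)
        + sigma2 * (((S : ℝ) - B) / ((B : ℝ) * ((S : ℝ) - 1)))) := by
  classical
  have hS0 : (S:ℝ) ≠ 0 := Nat.cast_ne_zero.mpr (by omega)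
  have hS2 : (2:ℝ) ≤ (S:ℝ) := by exact_mod_cast hS
  have hS1 : (S:ℝ) - 1 ≠ 0 := by intro h; linarith
  have hB0 : (B:ℝ) ≠ 0 := Nat.cast_ne_zero.mpr (by omega)
  set A := allocs S M C L with hA
  have hAne : A.Nonempty := allocs_nonempty hM hC1 hCM hL
  have hcA0 : (A.card : ℝ) ≠ 0 := Nat.cast_ne_zero.mpr (Finset.card_pos.mpr hAne).ne'
  set W : ℝ := (((L.choose B)^M : ℕ) : ℝ) with hWdef
  have hW0 : W ≠ 0 := by
    rw [hWdef]
    exact Nat.cast_ne_zero.mpr (pow_pos (Nat.choose_pos hBL) M).ne'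
  have hcardb : ∀ a ∈ A, ((batches a B).card : ℝ) = W := by
    intro a ha
    rw [card_batches ha, hWdef]
  set Pr : ℝ := ∑ a ∈ A, ((batches a B).card : ℝ) with hPrdef
  have hPr : Pr = (A.card : ℝ) * W := by
    rw [hPrdef, Finset.sum_congr rfl hcardb, Finset.sum_const, nsmul_eq_mul]
  -- expansion of a squared batch sum into indicators
  have expand : ∀ (T : Finset (Fin S)) (i : Fin n),
      (∑ s ∈ T, g s i)^2
        = ∑ s : Fin S, ∑ s' : Fin S, (if s ∈ T ∧ s' ∈ T then g s i * g s' i else 0) := by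
    intro T i
    have h1 : ∀ s : Fin S, ∑ s' : Fin S, (if s ∈ T ∧ s' ∈ T then g s i * g s' i else 0)
        = if s ∈ T then g s i * ∑ s' ∈ T, g s' i else 0 := by
      intro s
      by_cases hs : s ∈ T
      · simp only [hs, true_and, if_true]
        rw [Finset.sum_ite_mem, Finset.univ_inter, Finset.mul_sum]
      · simp [hs]
    rw [Finset.sum_congr rfl fun s _ => h1 s, Finset.sum_ite_mem, Finset.univ_inter,
      ← Finset.sum_mul, sq]
  -- the key per-(i,j) identity
  have key : ∀ (i : Fin n) (j : Fin M),
      (∑ a ∈ A, ∑ ξ ∈ batches a B, (∑ s ∈ ξ j, g s i)^2)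
        = ((B:ℝ) * Pr / S) * (∑ s, (g s i)^2)
          + (((B:ℝ)^2 - B) * Pr / ((S:ℝ) * ((S:ℝ)-1)))
            * ((∑ s, g s i)^2 - ∑ s, (g s i)^2) := by
    intro i j
    have step1 : (∑ a ∈ A, ∑ ξ ∈ batches a B, (∑ s ∈ ξ j, g s i)^2)
        = ∑ s : Fin S, ∑ s' : Fin S, g s i * g s' i * Kr S M C L B j s s' := by
      calc ∑ a ∈ A, ∑ ξ ∈ batches a B, (∑ s ∈ ξ j, g s i)^2
          = ∑ a ∈ A, ∑ ξ ∈ batches a B, ∑ s : Fin S, ∑ s' : Fin S,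
              (if s ∈ ξ j ∧ s' ∈ ξ j then g s i * g s' i else 0) := by
            refine Finset.sum_congr rfl fun a _ => Finset.sum_congr rfl fun ξ _ => ?_
            exact expand (ξ j) i
        _ = ∑ s : Fin S, ∑ a ∈ A, ∑ ξ ∈ batches a B, ∑ s' : Fin S,
              (if s ∈ ξ j ∧ s' ∈ ξ j then g s i * g s' i else 0) := by
            rw [swap_in]
        _ = ∑ s : Fin S, ∑ s' : Fin S, ∑ a ∈ A, ∑ ξ ∈ batches a B,
              (if s ∈ ξ j ∧ s' ∈ ξ j then g s i * g s' i else 0) := by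
            exact Finset.sum_congr rfl fun s _ => by rw [swap_in]
        _ = ∑ s : Fin S, ∑ s' : Fin S, g s i * g s' i * Kr S M C L B j s s' := by
            refine Finset.sum_congr rfl fun s _ => Finset.sum_congr rfl fun s' _ => ?_
            unfold Kr
            rw [Finset.mul_sum]
            refine Finset.sum_congr rfl fun a _ => ?_
            rw [Finset.mul_sum]
            refine Finset.sum_congr rfl fun ξ _ => ?_
            by_cases h : s ∈ ξ j ∧ s' ∈ ξ j <;> simp [h]
    rw [step1]
    set KD : ℝ := (B:ℝ) * Pr / S with hKD
    set KO : ℝ := ((B:ℝ)^2 - B) * Pr / ((S:ℝ) * ((S:ℝ)-1)) with hKO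
    set T : ℝ := ∑ s, g s i with hT
    have step2 : ∀ s : Fin S, ∑ s' : Fin S, g s i * g s' i * Kr S M C L B j s s'
        = g s i ^ 2 * KD + (g s i * KO) * (T - g s i) := by
      intro s
      rw [← Finset.add_sum_erase _ _ (Finset.mem_univ s)]
      congr 1
      · rw [Kr_diag_val (by omega) j s, ← hPrdef, ← hKD]; ring
      · have h1 : ∀ s' ∈ Finset.univ.erase s,
            g s i * g s' i * Kr S M C L B j s s' = (g s i * KO) * g s' i := by
          intro s' hs'
          rw [Kr_off_val hS j (Ne.symm (Finset.mem_erase.mp hs').1), ← hPrdef, ← hKO]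
          ring
        rw [Finset.sum_congr rfl h1, ← Finset.mul_sum,
          Finset.sum_erase_eq_sub (Finset.mem_univ s), ← hT]
    rw [Finset.sum_congr rfl fun s _ => step2 s]
    have h2 : ∀ s : Fin S, g s i ^ 2 * KD + (g s i * KO) * (T - g s i)
        = KD * g s i ^ 2 + KO * (g s i * T) - KO * g s i ^ 2 := fun s => by ring
    rw [Finset.sum_congr rfl fun s _ => h2 s, Finset.sum_sub_distrib,
      Finset.sum_add_distrib, ← Finset.mul_sum, ← Finset.mul_sum, ← Finset.mul_sum,
      ← Finset.sum_mul, ← hT]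
    ring
  -- rewrite the left-hand side
  have lhs_eq : (∑ a ∈ A,
        (∑ ξ ∈ batches a B, frobSq (Gmat g B ξ)) / ((batches a B).card : ℝ))
      = (∑ i, ∑ j : Fin M, ∑ a ∈ A, ∑ ξ ∈ batches a B, (∑ s ∈ ξ j, g s i)^2)
          / (B:ℝ)^2 / W := by
    have h1 : ∀ a ∈ A, (∑ ξ ∈ batches a B, frobSq (Gmat g B ξ)) / ((batches a B).card : ℝ)
        = (∑ ξ ∈ batches a B, frobSq (Gmat g B ξ)) / W := by
      intro a ha; rw [hcardb a ha]
    rw [Finset.sum_congr rfl h1, ← Finset.sum_div]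
    congr 1
    have h2 : ∀ (ξ : Fin M → Finset (Fin S)), frobSq (Gmat g B ξ)
        = (∑ i, ∑ j, (∑ s ∈ ξ j, g s i)^2) / (B:ℝ)^2 := by
      intro ξ
      simp only [frobSq, Gmat, Matrix.of_apply, div_pow]
      rw [Finset.sum_div]
      exact Finset.sum_congr rfl fun i _ => by rw [Finset.sum_div]
    rw [Finset.sum_congr rfl fun a _ => Finset.sum_congr rfl fun ξ _ => h2 ξ]
    rw [Finset.sum_congr rfl fun a (_ : a ∈ A) => by rw [← Finset.sum_div], ← Finset.sum_div]
    congr 1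
    calc ∑ a ∈ A, ∑ ξ ∈ batches a B, ∑ i : Fin n, ∑ j : Fin M, (∑ s ∈ ξ j, g s i)^2
        = ∑ i : Fin n, ∑ a ∈ A, ∑ ξ ∈ batches a B, ∑ j : Fin M, (∑ s ∈ ξ j, g s i)^2 :=
          (swap_in _ _ _).symm
      _ = ∑ i : Fin n, ∑ j : Fin M, ∑ a ∈ A, ∑ ξ ∈ batches a B, (∑ s ∈ ξ j, g s i)^2 :=
          Finset.sum_congr rfl fun i _ => (swap_in _ _ _).symm
  rw [lhs_eq]
  rw [Finset.sum_congr rfl fun i (_ : i ∈ Finset.univ) =>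
    Finset.sum_congr rfl fun j (_ : j ∈ Finset.univ) => key i j]
  -- now both sides are explicit; finish with algebra
  have hvar : ∀ i : Fin n, (∑ s, (g s i - gradF i)^2)
      = (∑ s, (g s i)^2) - (∑ s, g s i)^2 / S := by
    intro i
    rw [hgradF]
    simp only
    set T : ℝ := ∑ s, g s i with hT
    have h1 : ∀ s : Fin S, (g s i - T/S)^2
        = g s i^2 - 2*(T/S)*g s i + (T/S)^2 := fun s => by ring
    rw [Finset.sum_congr rfl fun s _ => h1 s, Finset.sum_add_distrib,
      Finset.sum_sub_distrib, ← Finset.mul_sum, ← hT, Finset.sum_const,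
      Finset.card_univ, Fintype.card_fin, nsmul_eq_mul]
    field_simp
    ring
  have hsig : sigma2 = ∑ i, ((∑ s, (g s i)^2) - (∑ s, g s i)^2 / S) / S := by
    rw [hsigma2]
    exact Finset.sum_congr rfl fun i _ => by rw [hvar i]
  have hMsum : ∀ F : Fin n → ℝ, (∑ i, ∑ _j : Fin M, F i) = ∑ i, (M:ℝ) * F i := by
    intro F
    refine Finset.sum_congr rfl fun i _ => ?_
    rw [Finset.sum_const, Finset.card_univ, Fintype.card_fin, nsmul_eq_mul]
  rw [hMsum]
  rw [Finset.sum_div, Finset.sum_div, Finset.sum_div]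
  rw [hsig, hgradF]
  simp only
  conv_rhs => rw [Finset.sum_mul, ← Finset.sum_add_distrib, Finset.mul_sum]
  refine Finset.sum_congr rfl fun i _ => ?_
  rw [hPr]
  field_simp
  ring
end
end

section
/- Under assumptions A1–A4, if every worker computes a deterministic full-batch subgradient and the Euclidean norm of every subgradient of every F_j is bounded by a constant L, then for every constant learning rate η > 0, every node i, and every K ≥ 1: F(ŵ_i(K−1)) − F* ≤ (M/(2ηK))·dist(w̄(0), W*)² + ηML²/2 + L·(3M^{3/2}√R/K)·(1−|λ2|^K)/(1−|λ2|) + (3ηM^{3/2}L²/(1−|λ2|))·(1 − (1/K)·(1−|λ2|^K)/(1−|λ2|)). -/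
/-!
The column average `w̄(k)` of the iterates runs a plain subgradient method with the averaged
subgradient `ḡ(k)`, because `A` has unit row sums; telescoping `‖w̄(k) - w*‖²` bounds
`∑ₖ ⟪ḡ(k), w̄(k) - w*⟫`. The consensus error `‖W(k) (I - 𝟙𝟙ᵀ/M)‖_F` is contracted by `|λ₂|` at
each mixing step, since the centering projector removes the eigenspace of `λ₁ = 1` and the other
eigenspaces are mutually orthogonal, and the subgradient step adds at most `η √M L`; so it is
bounded by a geometric series. Since every subgradient has norm at most `L`, each `Fⱼ` is
`L`-Lipschitz, and the subgradient inequalities bound `F(wᵢ(k)) - F*` by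
`M ⟪ḡ(k), w̄(k) - w*⟫` plus `3 M L` times the consensus error. Summing over `k` and applying
Jensen's inequality to the time average gives the bound.
-/

open MeasureTheory Matrix Finset

noncomputable section

/-- Squared Frobenius norm of a complex matrix. -/
def frobSqC {n M : ℕ} (B : Matrix (Fin n) (Fin M) ℂ) : ℝ := ∑ i, ∑ j, ‖B i j‖ ^ 2

/-- The `j`-th column of a matrix, viewed as a vector of `EuclideanSpace ℝ (Fin n)`. -/
def col {n M : ℕ} (B : Matrix (Fin n) (Fin M) ℝ) (j : Fin M) : EuclideanSpace ℝ (Fin n) :=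
  WithLp.toLp 2 (fun i => B i j)

/-- The average of the columns of `B` (the average model `w̄`). -/
def colAvg {n M : ℕ} (B : Matrix (Fin n) (Fin M) ℝ) : EuclideanSpace ℝ (Fin n) :=
  WithLp.toLp 2 (fun i => (∑ j, B i j) / M)

/-- Time average of a sequence of vectors over iterations `0, …, K-1`. -/
def timeAvg {n : ℕ} (K : ℕ) (v : ℕ → EuclideanSpace ℝ (Fin n)) : EuclideanSpace ℝ (Fin n) :=
  WithLp.toLp 2 (fun i => (∑ k ∈ Finset.range K, v k i) / K)

/-- `g` is a subgradient of `f` at `x`. -/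
def IsSubgradAt {n : ℕ} (f : EuclideanSpace ℝ (Fin n) → ℝ)
    (g x : EuclideanSpace ℝ (Fin n)) : Prop :=
  ∀ y, f x + (inner ℝ g (y - x) : ℝ) ≤ f y

open scoped Matrix.Norms.Frobenius

section Frobenius

variable {m n : Type*} [Fintype m] [Fintype n]

theorem Matrix.frobenius_norm_sq {α : Type*} [SeminormedAddCommGroup α] (B : Matrix m n α) :
    ‖B‖ ^ 2 = ∑ i, ∑ j, ‖B i j‖ ^ 2 := by
  change ‖WithLp.toLp 2 fun i => WithLp.toLp 2 fun j => B i j‖ ^ 2 = _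
  simp only [PiLp.norm_sq_eq_of_L2]

theorem Matrix.frobenius_norm_sq_eq_trace (Z : Matrix m n ℂ) :
    ((‖Z‖ ^ 2 : ℝ) : ℂ) = trace (Zᴴ * Z) := by
  simp only [Matrix.frobenius_norm_sq, trace, diag_apply, mul_apply, conjTranspose_apply,
    RCLike.star_def, Complex.conj_mul', Complex.ofReal_sum, Complex.ofReal_pow]
  exact Finset.sum_comm

theorem Matrix.frobenius_norm_add_sq_of_trace_eq_zero (Y Z : Matrix m n ℂ)
    (h : trace (Yᴴ * Z) = 0) : ‖Y + Z‖ ^ 2 = ‖Y‖ ^ 2 + ‖Z‖ ^ 2 := by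
  have h' : trace (Zᴴ * Y) = 0 := by
    rw [← conjTranspose_conjTranspose Y, ← conjTranspose_mul, trace_conjTranspose, h, star_zero]
  apply Complex.ofReal_injective
  push_cast
  simp only [← Complex.ofReal_pow, frobenius_norm_sq_eq_trace, conjTranspose_add,
    Matrix.add_mul, Matrix.mul_add, trace_add, h, h']
  ring

theorem Matrix.frobenius_norm_sq_sum_smul_of_trace_eq_zero {ι : Type*} [DecidableEq ι]
    (Y : ι → Matrix m n ℂ)
    (hY : ∀ q q', q ≠ q' → trace ((Y q)ᴴ * Y q') = 0) (c : ι → ℂ) (s : Finset ι) :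
    ‖∑ q ∈ s, c q • Y q‖ ^ 2 = ∑ q ∈ s, ‖c q‖ ^ 2 * ‖Y q‖ ^ 2 := by
  induction s using Finset.induction_on with
  | empty => simp
  | insert a s ha ih =>
    rw [Finset.sum_insert ha, Finset.sum_insert ha, frobenius_norm_add_sq_of_trace_eq_zero, ih,
      norm_smul, mul_pow]
    rw [conjTranspose_smul, Matrix.mul_sum, trace_sum]
    refine Finset.sum_eq_zero fun q hq => ?_
    rw [Matrix.smul_mul, Matrix.mul_smul, trace_smul, trace_smul,
      hY a q (ne_of_mem_of_not_mem hq ha).symm, smul_zero, smul_zero]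

theorem Matrix.trace_conjTranspose_mul_proj_mul_proj_eq_zero {P P' : Matrix n n ℂ} (hP : Pᴴ = P)
    (h : P' * P = 0) (X : Matrix m n ℂ) :
    trace ((X * P)ᴴ * (X * P')) = 0 := by
  rw [conjTranspose_mul, hP, trace_mul_comm, Matrix.mul_assoc, ← Matrix.mul_assoc P', h,
    Matrix.zero_mul, Matrix.mul_zero, trace_zero]

theorem Matrix.frobenius_norm_map_ofReal (B : Matrix m n ℝ) : ‖B.map ((↑) : ℝ → ℂ)‖ = ‖B‖ :=
  frobenius_norm_map_eq _ _ Complex.norm_real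

end Frobenius

theorem Matrix.map_ofReal_mul {l m n : Type*} [Fintype m] (B : Matrix l m ℝ) (A : Matrix m n ℝ) :
    (B * A).map ((↑) : ℝ → ℂ) = B.map ((↑) : ℝ → ℂ) * A.map ((↑) : ℝ → ℂ) :=
  Matrix.map_mul (f := Complex.ofRealHom)

section Columns

variable {n M : ℕ}

theorem frobSq_eq_norm_sq (B : Matrix (Fin n) (Fin M) ℝ) : frobSq B = ‖B‖ ^ 2 := by
  simp [frobSq, Matrix.frobenius_norm_sq]

theorem norm_sq_eq_sum_norm_col_sq (B : Matrix (Fin n) (Fin M) ℝ) :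
    ‖B‖ ^ 2 = ∑ j, ‖_root_.col B j‖ ^ 2 := by
  simp only [Matrix.frobenius_norm_sq, EuclideanSpace.norm_sq_eq, _root_.col]
  exact Finset.sum_comm

theorem norm_col_le (B : Matrix (Fin n) (Fin M) ℝ) (j : Fin M) : ‖_root_.col B j‖ ≤ ‖B‖ := by
  refine pow_le_pow_iff_left₀ (norm_nonneg _) (norm_nonneg _) two_ne_zero |>.mp ?_
  rw [norm_sq_eq_sum_norm_col_sq]
  exact Finset.single_le_sum (fun j _ => sq_nonneg ‖_root_.col B j‖) (Finset.mem_univ j)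

theorem sum_norm_col_le (B : Matrix (Fin n) (Fin M) ℝ) :
    ∑ j, ‖_root_.col B j‖ ≤ Real.sqrt M * ‖B‖ := by
  have h := sq_sum_le_card_mul_sum_sq (s := Finset.univ) (f := fun j => ‖_root_.col B j‖)
  rw [Finset.card_univ, Fintype.card_fin, ← norm_sq_eq_sum_norm_col_sq] at h
  refine abs_le_of_sq_le_sq' ?_ (by positivity) |>.2
  rwa [mul_pow, Real.sq_sqrt (Nat.cast_nonneg M)]

theorem norm_le_of_norm_col_le {L : ℝ} {B : Matrix (Fin n) (Fin M) ℝ}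
    (hB : ∀ j, ‖_root_.col B j‖ ≤ L) : ‖B‖ ≤ Real.sqrt M * L := by
  rcases Nat.eq_zero_or_pos M with rfl | hM
  · simp [Subsingleton.elim B 0]
  have hL : 0 ≤ L := (norm_nonneg _).trans (hB ⟨0, hM⟩)
  refine abs_le_of_sq_le_sq' ?_ (by positivity) |>.2
  rw [mul_pow, Real.sq_sqrt (Nat.cast_nonneg M), norm_sq_eq_sum_norm_col_sq]
  calc ∑ j, ‖_root_.col B j‖ ^ 2 ≤ ∑ _j : Fin M, L ^ 2 :=
        Finset.sum_le_sum fun j _ => pow_le_pow_left₀ (norm_nonneg _) (hB j) 2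
    _ = M * L ^ 2 := by simp

end Columns

section Averaging

variable {n M : ℕ}

theorem col_ctr (B : Matrix (Fin n) (Fin M) ℝ) (j : Fin M) :
    _root_.col (ctr B) j = _root_.col B j - colAvg B := rfl

theorem colAvg_eq_inv_smul_sum (B : Matrix (Fin n) (Fin M) ℝ) :
    colAvg B = (M : ℝ)⁻¹ • ∑ j, _root_.col B j := by
  ext i
  simp [colAvg, _root_.col, WithLp.ofLp_sum, div_eq_inv_mul]

theorem colAvg_mul_of_sum_row_eq_one (B : Matrix (Fin n) (Fin M) ℝ) {A : Matrix (Fin M) (Fin M) ℝ}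
    (hA : ∀ l, ∑ j, A l j = 1) : colAvg (B * A) = colAvg B := by
  ext i
  simp only [colAvg, mul_apply]
  rw [Finset.sum_comm]
  simp [← Finset.mul_sum, hA]

theorem colAvg_sub_smul (X Y : Matrix (Fin n) (Fin M) ℝ) (c : ℝ) :
    colAvg (X - c • Y) = colAvg X - c • colAvg Y := by
  ext i
  simp only [colAvg, Matrix.sub_apply, Matrix.smul_apply, PiLp.sub_apply, PiLp.smul_apply,
    smul_eq_mul, Finset.sum_sub_distrib, ← Finset.mul_sum]
  ring

theorem ctr_sub_smul (X Y : Matrix (Fin n) (Fin M) ℝ) (c : ℝ) :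
    ctr (X - c • Y) = ctr X - c • ctr Y := by
  ext i j
  simp only [ctr, of_apply, Matrix.sub_apply, Matrix.smul_apply, smul_eq_mul,
    Finset.sum_sub_distrib, ← Finset.mul_sum]
  ring

theorem norm_colAvg_le (hM : 0 < M) {L : ℝ} {B : Matrix (Fin n) (Fin M) ℝ}
    (hB : ∀ j, ‖_root_.col B j‖ ≤ L) : ‖colAvg B‖ ≤ L := by
  rw [colAvg_eq_inv_smul_sum, norm_smul, norm_inv, RCLike.norm_natCast,
    inv_mul_le_iff₀ (by exact_mod_cast hM)]
  calc ‖∑ j, _root_.col B j‖ ≤ ∑ j, ‖_root_.col B j‖ := norm_sum_le _ _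
    _ ≤ ∑ _j : Fin M, L := Finset.sum_le_sum fun j _ => hB j
    _ = M * L := by simp

theorem ctr_map_ofReal (B : Matrix (Fin n) (Fin M) ℝ) :
    (ctr B).map ((↑) : ℝ → ℂ) =
      B.map ((↑) : ℝ → ℂ) * (1 - (Matrix.of fun _ _ => (M : ℂ)⁻¹ : Matrix (Fin M) (Fin M) ℂ)) := by
  rw [Matrix.mul_sub, Matrix.mul_one]
  ext i j
  simp [ctr, mul_apply, Finset.sum_mul, div_eq_mul_inv]

theorem sum_sub_mean_sq_le (x : Fin M → ℝ) :
    ∑ j, (x j - (∑ j', x j') / M) ^ 2 ≤ ∑ j, x j ^ 2 := by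
  rcases Nat.eq_zero_or_pos M with rfl | hM
  · simp
  have hM' : (M : ℝ) ≠ 0 := by positivity
  have hexpand : ∑ j, (x j - (∑ j', x j') / M) ^ 2 = ∑ j, x j ^ 2 - (∑ j, x j) ^ 2 / M := by
    simp only [sub_sq, Finset.sum_add_distrib, Finset.sum_sub_distrib, ← Finset.sum_mul,
      ← Finset.mul_sum, Finset.sum_const, Finset.card_univ, Fintype.card_fin, nsmul_eq_mul]
    field_simp
    ring
  rw [hexpand]
  linarith [div_nonneg (sq_nonneg (∑ j, x j)) (Nat.cast_nonneg (α := ℝ) M)]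

theorem norm_ctr_le (B : Matrix (Fin n) (Fin M) ℝ) : ‖ctr B‖ ≤ ‖B‖ := by
  refine pow_le_pow_iff_left₀ (norm_nonneg _) (norm_nonneg _) two_ne_zero |>.mp ?_
  simp only [Matrix.frobenius_norm_sq, Real.norm_eq_abs, sq_abs]
  exact Finset.sum_le_sum fun i _ => sum_sub_mean_sq_le (B i)

end Averaging

theorem norm_ctr_mul_le {n M : ℕ} {ι : Type*} [Fintype ι] [DecidableEq ι]
    {A : Matrix (Fin M) (Fin M) ℝ} {lam : ι → ℂ} {P : ι → Matrix (Fin M) (Fin M) ℂ}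
    (hdecomp : A.map (fun x => (x : ℂ)) = ∑ q, lam q • P q) (hherm : ∀ q, (P q)ᴴ = P q)
    (hidem : ∀ q, P q * P q = P q) (horth : ∀ q q', q ≠ q' → P q * P q' = 0)
    (hPsum : ∑ q, P q = 1) {q₀ : ι} (hP₀ : P q₀ = Matrix.of fun _ _ => (M : ℂ)⁻¹)
    {r : ℝ} (hr : 0 ≤ r) (hlam : ∀ q, q ≠ q₀ → ‖lam q‖ ≤ r) (B : Matrix (Fin n) (Fin M) ℝ) :
    ‖ctr (B * A)‖ ≤ r * ‖ctr B‖ := by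
  set s := Finset.univ.erase q₀
  set X := B.map ((↑) : ℝ → ℂ)
  have hproj : 1 - P q₀ = ∑ q ∈ s, P q := by
    rw [Finset.sum_erase_eq_sub (Finset.mem_univ q₀), hPsum]
  have hmix : A.map ((↑) : ℝ → ℂ) * (1 - P q₀) = ∑ q ∈ s, lam q • P q := by
    rw [hdecomp, Finset.sum_mul, ← Finset.add_sum_erase _ _ (Finset.mem_univ q₀)]
    have hq₀ : lam q₀ • P q₀ * (1 - P q₀) = 0 := by
      rw [Matrix.smul_mul, Matrix.mul_sub, Matrix.mul_one, hidem, sub_self, smul_zero]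
    rw [hq₀, zero_add]
    refine Finset.sum_congr rfl fun q hq => ?_
    rw [Matrix.smul_mul, Matrix.mul_sub, Matrix.mul_one, horth q q₀ (Finset.ne_of_mem_erase hq),
      sub_zero]
  have hctrA : (ctr (B * A)).map ((↑) : ℝ → ℂ) = ∑ q ∈ s, lam q • (X * P q) := by
    rw [ctr_map_ofReal, ← hP₀, Matrix.map_ofReal_mul, Matrix.mul_assoc, hmix, Matrix.mul_sum]
    simp only [Matrix.mul_smul, X]
  have hctr : (ctr B).map ((↑) : ℝ → ℂ) = ∑ q ∈ s, (1 : ℂ) • (X * P q) := by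
    rw [ctr_map_ofReal, ← hP₀, hproj, Matrix.mul_sum]
    simp only [one_smul, X]
  have horthX : ∀ q q', q ≠ q' → trace ((X * P q)ᴴ * (X * P q')) = 0 := fun q q' h =>
    trace_conjTranspose_mul_proj_mul_proj_eq_zero (hherm q) (horth q' q h.symm) X
  have hsq : ‖ctr (B * A)‖ ^ 2 ≤ (r * ‖ctr B‖) ^ 2 := by
    rw [← frobenius_norm_map_ofReal, ← frobenius_norm_map_ofReal (ctr B), hctrA, hctr, mul_pow,
      frobenius_norm_sq_sum_smul_of_trace_eq_zero _ horthX,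
      frobenius_norm_sq_sum_smul_of_trace_eq_zero _ horthX, Finset.mul_sum]
    refine Finset.sum_le_sum fun q hq => ?_
    rw [norm_one, one_pow, one_mul]
    gcongr
    exact hlam q (Finset.ne_of_mem_erase hq)
  exact (pow_le_pow_iff_left₀ (norm_nonneg _) (by positivity) two_ne_zero).mp hsq

section Subgradient

/-- Supporting hyperplane to the epigraph: separate the open convex strict epigraph from the
point `(x, f x)` and normalise the vertical component of the separating functional. -/
theorem ConvexOn.exists_clm_add_le {E : Type*} [NormedAddCommGroup E] [NormedSpace ℝ E]
    {f : E → ℝ} (hf : ConvexOn ℝ Set.univ f) (hfc : Continuous f) (x : E) :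
    ∃ ℓ : E →L[ℝ] ℝ, ∀ y, f x + ℓ (y - x) ≤ f y := by
  have hopen : IsOpen {p : E × ℝ | p.1 ∈ Set.univ ∧ f p.1 < p.2} := by
    simpa using isOpen_lt (hfc.comp continuous_fst) continuous_snd
  obtain ⟨φ, hφ⟩ := geometric_hahn_banach_open_point hf.convex_strict_epigraph hopen
    (x := (x, f x)) (by simp)
  set c := φ (0, 1)
  have hsplit : ∀ y t, φ (y, t) = φ (y, 0) + t * c := fun y t => by
    rw [show ((y, t) : E × ℝ) = (y, 0) + t • (0, 1) by simp, map_add, map_smul, smul_eq_mul]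
  have hepi : ∀ y t, f y < t → φ (y, 0) + t * c < φ (x, 0) + f x * c := fun y t ht => by
    rw [← hsplit, ← hsplit]
    exact hφ (y, t) ⟨Set.mem_univ y, ht⟩
  have hc : 0 < -c := by linarith [hepi x (f x + 1) (lt_add_one _)]
  refine ⟨(-c)⁻¹ • φ.comp (ContinuousLinearMap.inl ℝ E ℝ), fun y => ?_⟩
  refine le_of_forall_gt_imp_ge_of_dense fun t ht => ?_
  have hφsub : φ (y - x, 0) = φ (y, 0) - φ (x, 0) := by
    rw [← map_sub, Prod.mk_sub_mk, sub_zero]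
  have hlt := hepi y t ht
  simp only [_root_.smul_apply, ContinuousLinearMap.comp_apply,
    ContinuousLinearMap.inl_apply, hφsub, smul_eq_mul]
  rw [← le_sub_iff_add_le', inv_mul_le_iff₀ hc]
  linarith

theorem ConvexOn.exists_isSubgradAt {n : ℕ} {f : EuclideanSpace ℝ (Fin n) → ℝ}
    (hf : ConvexOn ℝ Set.univ f) (x : EuclideanSpace ℝ (Fin n)) : ∃ g, IsSubgradAt f g x := by
  obtain ⟨ℓ, hℓ⟩ := hf.exists_clm_add_le (continuousOn_univ.mp (hf.continuousOn isOpen_univ)) x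
  exact ⟨(InnerProductSpace.toDual ℝ _).symm ℓ, fun y => by
    simpa only [InnerProductSpace.toDual_symm_apply] using hℓ y⟩

theorem ConvexOn.le_add_mul_norm_sub {n : ℕ} {f : EuclideanSpace ℝ (Fin n) → ℝ}
    (hf : ConvexOn ℝ Set.univ f) {L : ℝ} (hL : ∀ w g, IsSubgradAt f g w → ‖g‖ ≤ L)
    (x y : EuclideanSpace ℝ (Fin n)) : f x ≤ f y + L * ‖x - y‖ := by
  obtain ⟨g, hg⟩ := hf.exists_isSubgradAt x
  have hinner : -(inner ℝ g (y - x) : ℝ) ≤ L * ‖x - y‖ := by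
    rw [← inner_neg_right, neg_sub]
    exact (real_inner_le_norm g _).trans (mul_le_mul_of_nonneg_right (hL x g hg) (norm_nonneg _))
  linarith [hg y]

end Subgradient

section Sequences

theorem two_mul_sum_inner_le_of_eq_sub_smul {E : Type*} [NormedAddCommGroup E]
    [InnerProductSpace ℝ E] {x g : ℕ → E} {η L : ℝ} (hx : ∀ k, x (k + 1) = x k - η • g k)
    (hg : ∀ k, ‖g k‖ ≤ L) (z : E) (K : ℕ) :
    2 * η * ∑ k ∈ Finset.range K, (inner ℝ (g k) (x k - z) : ℝ)
      ≤ ‖x 0 - z‖ ^ 2 + K * (η ^ 2 * L ^ 2) := by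
  have hstep : ∀ k, 2 * η * (inner ℝ (g k) (x k - z) : ℝ)
      ≤ ‖x k - z‖ ^ 2 - ‖x (k + 1) - z‖ ^ 2 + η ^ 2 * L ^ 2 := fun k => by
    have hnorm : ‖x (k + 1) - z‖ ^ 2 = ‖x k - z‖ ^ 2
        - 2 * η * (inner ℝ (g k) (x k - z) : ℝ) + η ^ 2 * ‖g k‖ ^ 2 := by
      rw [hx k, sub_right_comm, norm_sub_sq_real, real_inner_smul_right, norm_smul,
        Real.norm_eq_abs, mul_pow, sq_abs, real_inner_comm]
      ring
    have hgL : ‖g k‖ ^ 2 ≤ L ^ 2 := pow_le_pow_left₀ (norm_nonneg _) (hg k) 2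
    nlinarith [sq_nonneg η]
  calc 2 * η * ∑ k ∈ Finset.range K, (inner ℝ (g k) (x k - z) : ℝ)
      ≤ ∑ k ∈ Finset.range K, (‖x k - z‖ ^ 2 - ‖x (k + 1) - z‖ ^ 2 + η ^ 2 * L ^ 2) := by
        rw [Finset.mul_sum]
        exact Finset.sum_le_sum fun k _ => hstep k
    _ = ‖x 0 - z‖ ^ 2 - ‖x K - z‖ ^ 2 + K * (η ^ 2 * L ^ 2) := by
        rw [Finset.sum_add_distrib, Finset.sum_range_sub' (fun k => ‖x k - z‖ ^ 2)]
        simp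
    _ ≤ ‖x 0 - z‖ ^ 2 + K * (η ^ 2 * L ^ 2) := by linarith [sq_nonneg ‖x K - z‖]

variable {e : ℕ → ℝ} {r c : ℝ}

theorem le_pow_mul_add_geom_sum (hr : 0 ≤ r) (h : ∀ k, e (k + 1) ≤ r * e k + c) (k : ℕ) :
    e k ≤ r ^ k * e 0 + c * ∑ s ∈ Finset.range k, r ^ s := by
  induction k with
  | zero => simp
  | succ k ih =>
    calc e (k + 1) ≤ r * (r ^ k * e 0 + c * ∑ s ∈ Finset.range k, r ^ s) + c := by
          nlinarith [h k]
      _ = r ^ (k + 1) * e 0 + c * ∑ s ∈ Finset.range (k + 1), r ^ s := by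
          rw [geom_sum_succ]
          ring

theorem geom_sum_eq_one_sub_div (hr : r ≠ 1) (k : ℕ) :
    ∑ s ∈ Finset.range k, r ^ s = (1 - r ^ k) / (1 - r) := by
  rw [geom_sum_eq hr, ← neg_div_neg_eq, neg_sub, neg_sub]

theorem sum_range_le_of_le_mul_add (hr : 0 ≤ r) (hr1 : r ≠ 1)
    (h : ∀ k, e (k + 1) ≤ r * e k + c) (K : ℕ) :
    ∑ k ∈ Finset.range K, e k ≤ e 0 * ((1 - r ^ K) / (1 - r))
      + c * ((K - (1 - r ^ K) / (1 - r)) / (1 - r)) := by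
  calc ∑ k ∈ Finset.range K, e k
      ≤ ∑ k ∈ Finset.range K, (r ^ k * e 0 + c * ((1 - r ^ k) / (1 - r))) := by
        refine Finset.sum_le_sum fun k _ => ?_
        rw [← geom_sum_eq_one_sub_div hr1]
        exact le_pow_mul_add_geom_sum hr h k
    _ = _ := by
        rw [Finset.sum_add_distrib, ← Finset.sum_mul, ← Finset.mul_sum, ← Finset.sum_div,
          Finset.sum_sub_distrib, geom_sum_eq_one_sub_div hr1]
        simp [mul_comm]

end Sequences

theorem ConvexOn.map_timeAvg_sub_le {n : ℕ} {F : EuclideanSpace ℝ (Fin n) → ℝ}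
    (hF : ConvexOn ℝ Set.univ F) {K : ℕ} (hK : 0 < K) (v : ℕ → EuclideanSpace ℝ (Fin n))
    (c : ℝ) : F (timeAvg K v) - c ≤ (∑ k ∈ Finset.range K, (F (v k) - c)) / K := by
  have hK' : (K : ℝ) ≠ 0 := by positivity
  have havg : timeAvg K v = ∑ k ∈ Finset.range K, (K : ℝ)⁻¹ • v k := by
    ext i
    simp [timeAvg, WithLp.ofLp_sum, Finset.sum_apply, ← Finset.mul_sum, div_eq_inv_mul]
  have hjensen := hF.map_sum_le (t := Finset.range K) (w := fun _ => (K : ℝ)⁻¹) (p := v)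
    (fun _ _ => by positivity) (by simp [hK']) (fun _ _ => Set.mem_univ _)
  rw [← havg] at hjensen
  rw [Finset.sum_sub_distrib, sub_div, Finset.sum_const, Finset.card_range, nsmul_eq_mul,
    mul_div_cancel_left₀ _ hK', Finset.sum_div]
  simpa [div_eq_inv_mul] using sub_le_sub_right hjensen c

theorem convexOn_sum {ι E : Type*} [AddCommMonoid E] [Module ℝ E] {s : Set E} (hs : Convex ℝ s)
    {f : ι → E → ℝ} (t : Finset ι) (hf : ∀ i ∈ t, ConvexOn ℝ s (f i)) :
    ConvexOn ℝ s fun x => ∑ i ∈ t, f i x := by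
  simpa only [← Finset.sum_apply] using
    Finset.sum_induction f (ConvexOn ℝ s) (fun _ _ => ConvexOn.add) (convexOn_const 0 hs) hf

theorem isClosed_setOf_forall_le {X : Type*} [TopologicalSpace X] {f : X → ℝ} (hf : Continuous f) :
    IsClosed {w | ∀ v, f w ≤ f v} := by
  rw [Set.ofPred_forall]
  exact isClosed_iInter fun v => isClosed_le hf continuous_const

section DecentralizedStep

variable {n M : ℕ}

theorem IsSubgradAt.le_add_inner_add {f : EuclideanSpace ℝ (Fin n) → ℝ}
    {g y : EuclideanSpace ℝ (Fin n)} (hsub : IsSubgradAt f g y) {L : ℝ} (hg : ‖g‖ ≤ L)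
    (hlip : ∀ x y, f x ≤ f y + L * ‖x - y‖) (x v z : EuclideanSpace ℝ (Fin n)) :
    f x ≤ f z + inner ℝ g (v - z) + 2 * L * ‖y - v‖ + L * ‖x - v‖ := by
  have hL : 0 ≤ L := (norm_nonneg g).trans hg
  have htri : ‖x - y‖ ≤ ‖x - v‖ + ‖y - v‖ := by
    simpa only [norm_sub_rev v y] using norm_sub_le_norm_sub_add_norm_sub x v y
  have hinner : (inner ℝ g (z - y) : ℝ) = -inner ℝ g (v - z) - inner ℝ g (y - v) := by
    rw [show z - y = -((v - z) + (y - v)) by abel, inner_neg_right, inner_add_right]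
    ring
  have hcs : (inner ℝ g (y - v) : ℝ) ≤ L * ‖y - v‖ :=
    (real_inner_le_norm g _).trans (mul_le_mul_of_nonneg_right hg (norm_nonneg _))
  linarith [hsub z, hlip x y, mul_le_mul_of_nonneg_left htri hL]

theorem sum_le_sum_add_inner_colAvg_add (hM : 0 < M) {Fj : Fin M → EuclideanSpace ℝ (Fin n) → ℝ}
    {B C : Matrix (Fin n) (Fin M) ℝ} {L : ℝ}
    (hsub : ∀ j, IsSubgradAt (Fj j) (_root_.col C j) (_root_.col B j))
    (hC : ∀ j, ‖_root_.col C j‖ ≤ L) (hlip : ∀ j x y, Fj j x ≤ Fj j y + L * ‖x - y‖)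
    (i : Fin M) (z : EuclideanSpace ℝ (Fin n)) :
    ∑ j, Fj j (_root_.col B i)
      ≤ ∑ j, Fj j z + M * inner ℝ (colAvg C) (colAvg B - z) + 3 * M * L * ‖ctr B‖ := by
  have hL : 0 ≤ L := (norm_nonneg _).trans (hC ⟨0, hM⟩)
  have hM' : (M : ℝ) ≠ 0 := by positivity
  have hsum := Finset.sum_le_sum fun j (_ : j ∈ Finset.univ) =>
    (hsub j).le_add_inner_add (hC j) (hlip j) (_root_.col B i) (colAvg B) z
  have hinner : ∑ j, (inner ℝ (_root_.col C j) (colAvg B - z) : ℝ)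
      = M * inner ℝ (colAvg C) (colAvg B - z) := by
    rw [colAvg_eq_inv_smul_sum C, real_inner_smul_left, ← sum_inner, mul_inv_cancel_left₀ hM']
  have hspread : ∑ j, ‖_root_.col B j - colAvg B‖ ≤ M * ‖ctr B‖ := by
    simp only [← col_ctr]
    refine (sum_norm_col_le _).trans (mul_le_mul_of_nonneg_right ?_ (norm_nonneg _))
    exact Real.sqrt_le_self_iff.mpr (Or.inr (by exact_mod_cast hM))
  have hi : ‖_root_.col B i - colAvg B‖ ≤ ‖ctr B‖ := norm_col_le (ctr B) i
  simp only [Finset.sum_add_distrib, ← Finset.mul_sum, Finset.sum_const, Finset.card_univ,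
    Fintype.card_fin, nsmul_eq_mul, hinner] at hsum
  linarith [mul_le_mul_of_nonneg_left hspread hL,
    mul_le_mul_of_nonneg_left hi (mul_nonneg hL (Nat.cast_nonneg (α := ℝ) M))]

theorem colAvg_mul_sub_smul {A : Matrix (Fin M) (Fin M) ℝ} (hA : ∀ l, ∑ j, A l j = 1)
    (B C : Matrix (Fin n) (Fin M) ℝ) (η : ℝ) :
    colAvg (B * A - η • C) = colAvg B - η • colAvg C := by
  rw [colAvg_sub_smul, colAvg_mul_of_sum_row_eq_one _ hA]

theorem norm_ctr_mul_sub_smul_le {A : Matrix (Fin M) (Fin M) ℝ} {r : ℝ}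
    (hA : ∀ B : Matrix (Fin n) (Fin M) ℝ, ‖ctr (B * A)‖ ≤ r * ‖ctr B‖) {η L : ℝ} (hη : 0 ≤ η)
    (B : Matrix (Fin n) (Fin M) ℝ) {C : Matrix (Fin n) (Fin M) ℝ}
    (hC : ∀ j, ‖_root_.col C j‖ ≤ L) :
    ‖ctr (B * A - η • C)‖ ≤ r * ‖ctr B‖ + η * (Real.sqrt M * L) := by
  rw [ctr_sub_smul]
  refine (norm_sub_le _ _).trans (add_le_add (hA B) ?_)
  rw [norm_smul, Real.norm_of_nonneg hη]
  exact mul_le_mul_of_nonneg_left ((norm_ctr_le C).trans (norm_le_of_norm_col_le hC)) hη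

end DecentralizedStep

section Iteration

variable {n M : ℕ} {A : Matrix (Fin M) (Fin M) ℝ} {W G : ℕ → Matrix (Fin n) (Fin M) ℝ}
  {η r L : ℝ}

theorem sum_range_sum_sub_le (hM : 0 < M) (hrows : ∀ l, ∑ j, A l j = 1)
    (hmix : ∀ B : Matrix (Fin n) (Fin M) ℝ, ‖ctr (B * A)‖ ≤ r * ‖ctr B‖) (hr : 0 ≤ r)
    (hr1 : r < 1) (hη : 0 < η) (hupd : ∀ k, W (k + 1) = W k * A - η • G k)
    {Fj : Fin M → EuclideanSpace ℝ (Fin n) → ℝ}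
    (hsub : ∀ k j, IsSubgradAt (Fj j) (_root_.col (G k) j) (_root_.col (W k) j))
    (hG : ∀ k j, ‖_root_.col (G k) j‖ ≤ L) (hlip : ∀ j x y, Fj j x ≤ Fj j y + L * ‖x - y‖)
    (i : Fin M) (z : EuclideanSpace ℝ (Fin n)) (K : ℕ) :
    ∑ k ∈ Finset.range K, (∑ j, Fj j (_root_.col (W k) i) - ∑ j, Fj j z)
      ≤ M * ((‖colAvg (W 0) - z‖ ^ 2 + K * (η ^ 2 * L ^ 2)) / (2 * η))
        + 3 * M * L * (‖ctr (W 0)‖ * ((1 - r ^ K) / (1 - r))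
          + η * (Real.sqrt M * L) * ((K - (1 - r ^ K) / (1 - r)) / (1 - r))) := by
  have hL : 0 ≤ L := (norm_nonneg _).trans (hG 0 i)
  have hcons := sum_range_le_of_le_mul_add (e := fun k => ‖ctr (W k)‖) hr hr1.ne
    (fun k => hupd k ▸ norm_ctr_mul_sub_smul_le hmix hη.le (W k) (hG k)) K
  have hdesc := two_mul_sum_inner_le_of_eq_sub_smul (x := fun k => colAvg (W k))
    (fun k => hupd k ▸ colAvg_mul_sub_smul hrows (W k) (G k) η)
    (fun k => norm_colAvg_le hM (hG k)) z K
  calc ∑ k ∈ Finset.range K, (∑ j, Fj j (_root_.col (W k) i) - ∑ j, Fj j z)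
      ≤ ∑ k ∈ Finset.range K, (M * inner ℝ (colAvg (G k)) (colAvg (W k) - z)
        + 3 * M * L * ‖ctr (W k)‖) := Finset.sum_le_sum fun k _ => by
          linarith [sum_le_sum_add_inner_colAvg_add hM (hsub k) (hG k) hlip i z]
    _ = M * ∑ k ∈ Finset.range K, inner ℝ (colAvg (G k)) (colAvg (W k) - z)
        + 3 * M * L * ∑ k ∈ Finset.range K, ‖ctr (W k)‖ := by
      rw [Finset.sum_add_distrib, ← Finset.mul_sum, ← Finset.mul_sum]
    _ ≤ _ := by
      gcongr
      rw [le_div_iff₀ (by positivity)]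
      linarith

end Iteration

theorem statement8_general
    (n M Q : ℕ) (hM : 0 < M) (hQ : 1 < Q)
    -- the consensus matrix: nonnegative, doubly stochastic (A4), normal (A4),
    -- irreducible (strongly connected graph, A3) and primitive (positive diagonal)
    (A : Matrix (Fin M) (Fin M) ℝ)
    (hrows : ∀ i, ∑ j, A i j = 1)
    -- spectral decomposition of `A` into orthogonal projectors onto its `Q` distinct
    -- eigenspaces, with eigenvalues ordered by decreasing modulus, `λ₁ = 1 > |λ₂|`
    (lam : Fin Q → ℂ) (P : Fin Q → Matrix (Fin M) (Fin M) ℂ)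
    (hdecomp : A.map (fun x => (x : ℂ)) = ∑ q, lam q • P q)
    (hherm : ∀ q, (P q)ᴴ = P q)
    (hidem : ∀ q, P q * P q = P q)
    (horth : ∀ q q', q ≠ q' → P q * P q' = 0)
    (hPsum : ∑ q, P q = 1)
    (hord : ∀ q q' : Fin Q, q ≤ q' → ‖lam q'‖ ≤ ‖lam q‖)
    (hP1 : ∀ q : Fin Q, (q : ℕ) = 0 → P q = Matrix.of fun _ _ => (M : ℂ)⁻¹)
    (lam2 : ℝ) (hlam2 : lam2 = ‖lam ⟨1, hQ⟩‖) (hlam2lt : lam2 < 1)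
    -- the local objective functions (A1), the global objective `F` and its
    -- nonempty set of global minimizers (A2), with minimum value `F*`
    (Fj : Fin M → EuclideanSpace ℝ (Fin n) → ℝ)
    (hconv : ∀ j, ConvexOn ℝ Set.univ (Fj j))
    (F : EuclideanSpace ℝ (Fin n) → ℝ) (hFdef : F = fun w => ∑ j, Fj j w)
    (Wstar : Set (EuclideanSpace ℝ (Fin n))) (hWstar : Wstar = {w | ∀ v, F w ≤ F v})
    (hWne : Wstar.Nonempty)
    (Fstar : ℝ) (hFstar : ∀ w ∈ Wstar, F w = Fstar)
    -- deterministic iterates and full-batch subgradient matrices, with the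
    -- decentralized update `W(k+1) = W(k) A - η G(k)` and constant learning rate
    (W G : ℕ → Matrix (Fin n) (Fin M) ℝ)
    (η : ℝ) (hη : 0 < η)
    (hupd : ∀ k, W (k + 1) = W k * A - η • G k)
    (hsub : ∀ k j, IsSubgradAt (Fj j) (col (G k) j) (col (W k) j))
    -- every subgradient of every `Fⱼ` has Euclidean norm at most `L`
    (L : ℝ)
    (hL : ∀ (j : Fin M) (w gsub : EuclideanSpace ℝ (Fin n)),
      IsSubgradAt (Fj j) gsub w → ‖gsub‖ ≤ L)
    (R : ℝ) (hR : R = frobSq (W 0))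
    (i : Fin M) (K : ℕ) (hK : 1 ≤ K) :
    F (timeAvg K fun k => col (W k) i) - Fstar ≤
      (M : ℝ) / (2 * η * K) * Metric.infDist (colAvg (W 0)) Wstar ^ 2
      + η * M * L ^ 2 / 2
      + L * (3 * ((M : ℝ) * Real.sqrt M) * Real.sqrt R / K) * ((1 - lam2 ^ K) / (1 - lam2))
      + 3 * η * ((M : ℝ) * Real.sqrt M) * L ^ 2 / (1 - lam2) *
          (1 - (1 / (K : ℝ)) * ((1 - lam2 ^ K) / (1 - lam2))) := by
  have hGL : ∀ k j, ‖_root_.col (G k) j‖ ≤ L := fun k j => hL j _ _ (hsub k j)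
  have hL0 : 0 ≤ L := (norm_nonneg _).trans (hGL 0 i)
  have hF : ConvexOn ℝ Set.univ F := hFdef ▸ convexOn_sum convex_univ _ fun j _ => hconv j
  obtain ⟨wst, hwst, hdist⟩ := (hWstar ▸ isClosed_setOf_forall_le
    (continuousOn_univ.mp (hF.continuousOn isOpen_univ))).exists_infDist_eq_dist hWne (colAvg (W 0))
  have hlam2nn : 0 ≤ lam2 := hlam2 ▸ norm_nonneg _
  have hmix : ∀ B : Matrix (Fin n) (Fin M) ℝ, ‖ctr (B * A)‖ ≤ lam2 * ‖ctr B‖ :=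
    norm_ctr_mul_le hdecomp hherm hidem horth hPsum (hP1 ⟨0, by omega⟩ rfl) hlam2nn
      fun q hq => hlam2 ▸ hord _ _ (Fin.le_def.mpr (Nat.one_le_iff_ne_zero.mpr
        fun h => hq (Fin.ext h)))
  have hgap := sum_range_sum_sub_le hM hrows hmix hlam2nn hlam2lt hη hupd hsub hGL
    (fun j => (hconv j).le_add_mul_norm_sub (hL j)) i wst K
  have hS : 0 ≤ (1 - lam2 ^ K) / (1 - lam2) :=
    div_nonneg (sub_nonneg.mpr (pow_le_one₀ hlam2nn hlam2lt.le)) (sub_nonneg.mpr hlam2lt.le)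
  have he0 : ‖ctr (W 0)‖ ≤ Real.sqrt M * Real.sqrt R := by
    rw [hR, frobSq_eq_norm_sq, Real.sqrt_sq (norm_nonneg _)]
    exact (norm_ctr_le _).trans
      (le_mul_of_one_le_left (norm_nonneg _) (Real.one_le_sqrt.mpr (by exact_mod_cast hM)))
  rw [hdist, dist_eq_norm, ← hFstar wst hwst]
  calc F (timeAvg K fun k => _root_.col (W k) i) - F wst
      ≤ (∑ k ∈ Finset.range K, (F (_root_.col (W k) i) - F wst)) / K :=
        hF.map_timeAvg_sub_le hK _ _
    _ ≤ (M * ((‖colAvg (W 0) - wst‖ ^ 2 + K * (η ^ 2 * L ^ 2)) / (2 * η))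
          + 3 * M * L * (Real.sqrt M * Real.sqrt R * ((1 - lam2 ^ K) / (1 - lam2))
            + η * (Real.sqrt M * L) * ((K - (1 - lam2 ^ K) / (1 - lam2)) / (1 - lam2)))) / K := by
        gcongr
        simp only [hFdef]
        exact hgap.trans (by gcongr)
    _ = _ := by
        field_simp
        ring

/-- **Corollary 4, eq. (local, full batch).** Under assumptions A1–A4, with deterministic
full-batch subgradients whose Euclidean norms are bounded by `L`, the local time-averaged
model of every node `i` satisfies the classic bound. -/
theorem statement8
    (n M Q : ℕ) (hM : 0 < M) (hQ : 1 < Q)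
    -- the consensus matrix: nonnegative, doubly stochastic (A4), normal (A4),
    -- irreducible (strongly connected graph, A3) and primitive (positive diagonal)
    (A : Matrix (Fin M) (Fin M) ℝ)
    (hnonneg : ∀ i j, 0 ≤ A i j)
    (hrows : ∀ i, ∑ j, A i j = 1)
    (hcols : ∀ j, ∑ i, A i j = 1)
    (hnormal : Aᵀ * A = A * Aᵀ)
    (hirr : ∀ i j, ∃ k : ℕ, 0 < (A ^ k) i j)
    (hdiag : ∀ i, 0 < A i i)
    -- spectral decomposition of `A` into orthogonal projectors onto its `Q` distinct
    -- eigenspaces, with eigenvalues ordered by decreasing modulus, `λ₁ = 1 > |λ₂|`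
    (lam : Fin Q → ℂ) (P : Fin Q → Matrix (Fin M) (Fin M) ℂ)
    (hdecomp : A.map (fun x => (x : ℂ)) = ∑ q, lam q • P q)
    (hinj : Function.Injective lam)
    (hherm : ∀ q, (P q)ᴴ = P q)
    (hidem : ∀ q, P q * P q = P q)
    (horth : ∀ q q', q ≠ q' → P q * P q' = 0)
    (hPsum : ∑ q, P q = 1)
    (hord : ∀ q q' : Fin Q, q ≤ q' → ‖lam q'‖ ≤ ‖lam q‖)
    (hlam1 : ∀ q : Fin Q, (q : ℕ) = 0 → lam q = 1)
    (hP1 : ∀ q : Fin Q, (q : ℕ) = 0 → P q = Matrix.of fun _ _ => (M : ℂ)⁻¹)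
    (lam2 : ℝ) (hlam2 : lam2 = ‖lam ⟨1, hQ⟩‖) (hlam2lt : lam2 < 1)
    -- the local objective functions (A1), the global objective `F` and its
    -- nonempty set of global minimizers (A2), with minimum value `F*`
    (Fj : Fin M → EuclideanSpace ℝ (Fin n) → ℝ)
    (hconv : ∀ j, ConvexOn ℝ Set.univ (Fj j))
    (F : EuclideanSpace ℝ (Fin n) → ℝ) (hFdef : F = fun w => ∑ j, Fj j w)
    (Wstar : Set (EuclideanSpace ℝ (Fin n))) (hWstar : Wstar = {w | ∀ v, F w ≤ F v})
    (hWne : Wstar.Nonempty)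
    (Fstar : ℝ) (hFstar : ∀ w ∈ Wstar, F w = Fstar)
    -- deterministic iterates and full-batch subgradient matrices, with the
    -- decentralized update `W(k+1) = W(k) A - η G(k)` and constant learning rate
    (W G : ℕ → Matrix (Fin n) (Fin M) ℝ)
    (η : ℝ) (hη : 0 < η)
    (hupd : ∀ k, W (k + 1) = W k * A - η • G k)
    (hsub : ∀ k j, IsSubgradAt (Fj j) (col (G k) j) (col (W k) j))
    -- every subgradient of every `Fⱼ` has Euclidean norm at most `L`
    (L : ℝ)
    (hL : ∀ (j : Fin M) (w gsub : EuclideanSpace ℝ (Fin n)),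
      IsSubgradAt (Fj j) gsub w → ‖gsub‖ ≤ L)
    (R : ℝ) (hR : R = frobSq (W 0))
    (i : Fin M) (K : ℕ) (hK : 1 ≤ K) :
    F (timeAvg K fun k => col (W k) i) - Fstar ≤
      (M : ℝ) / (2 * η * K) * Metric.infDist (colAvg (W 0)) Wstar ^ 2
      + η * M * L ^ 2 / 2
      + L * (3 * ((M : ℝ) * Real.sqrt M) * Real.sqrt R / K) * ((1 - lam2 ^ K) / (1 - lam2))
      + 3 * η * ((M : ℝ) * Real.sqrt M) * L ^ 2 / (1 - lam2) *
          (1 - (1 / (K : ℝ)) * ((1 - lam2 ^ K) / (1 - lam2))) :=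
  statement8_general n M Q hM hQ A hrows lam P hdecomp hherm hidem horth hPsum hord hP1 lam2 hlam2
    hlam2lt Fj hconv F hFdef Wstar hWstar hWne Fstar hFstar W G η hη hupd hsub L hL R hR i K hK

end
end
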